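/- arXiv:1712.00631 — 2 statements merged into one kernel-verified Lean document; each statement's English description precedes it below -/
import Mathlib

section
/- For every choice of reward parameters R_1, R_2 ∈ ℝ and every unit cost Λ ≥ 0, the link formation game has at least one pure-strategy Nash equilibrium; that is, there exists a profile (a_1*, a_2*) ∈ {0,1}² such that u_1(a_1*, a_2*) ≥ u_1(a_1, a_2*) for all a_1 ∈ {0,1} and u_2(a_2*, a_1*) ≥ u_2(a_2, a_1*) for all a_2 ∈ {0,1}. (Paper's Theorem 3: the distributed topology-design algorithm is guaranteed to determine at least one stable topology.) -/
/-- Utility of a player in the link formation game: `u R Λ a b = a·R − Λ·a/(a+b)`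
(in Lean, `0/0 = 0`, matching the paper's convention). -/
noncomputable def linkUtil (R Λ a b : ℝ) : ℝ := a * R - Λ * a / (a + b)

/-- `(a1, a2)` is a pure-strategy Nash equilibrium of the link formation game
with rewards `R1, R2` and unit cost `Λ`. -/
def IsLinkNE (R1 R2 Λ a1 a2 : ℝ) : Prop :=
  a1 ∈ ({0, 1} : Set ℝ) ∧ a2 ∈ ({0, 1} : Set ℝ) ∧
  (∀ a ∈ ({0, 1} : Set ℝ), linkUtil R1 Λ a a2 ≤ linkUtil R1 Λ a1 a2) ∧
  (∀ a ∈ ({0, 1} : Set ℝ), linkUtil R2 Λ a a1 ≤ linkUtil R2 Λ a2 a1)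

/-!
The link formation game is an exact potential game: on `{0,1}²` each player's utility differs
from `linkPotential` by a term depending only on the opponent's action, so a unilateral
deviation changes the deviator's utility exactly as much as the potential. Hence a maximiser of
the potential over the finite set `{0,1}²` is a pure Nash equilibrium.
-/

/-- The values `0, R1 - Λ, R2 - Λ, R1 + R2 - 3Λ/2` at `(0,0), (1,0), (0,1), (1,1)`. -/
noncomputable def linkPotential (R1 R2 Λ a1 a2 : ℝ) : ℝ :=
  a1 * R1 + a2 * R2 - Λ * (a1 + a2) + Λ * a1 * a2 / 2

theorem linkPotential_comm (R1 R2 Λ a1 a2 : ℝ) :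
    linkPotential R1 R2 Λ a1 a2 = linkPotential R2 R1 Λ a2 a1 := by
  unfold linkPotential
  ring

theorem linkUtil_eq_linkPotential_sub {a b : ℝ} (ha : a ∈ ({0, 1} : Set ℝ))
    (hb : b ∈ ({0, 1} : Set ℝ)) (R1 R2 Λ : ℝ) :
    linkUtil R1 Λ a b = linkPotential R1 R2 Λ a b - b * (R2 - Λ) := by
  rcases ha with rfl | rfl <;> rcases hb with rfl | rfl <;>
    norm_num [linkUtil, linkPotential]; ring

theorem isLinkNE_of_forall_linkPotential_le {R1 R2 Λ a1 a2 : ℝ}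
    (hmem : (a1, a2) ∈ ({0, 1} : Set ℝ) ×ˢ ({0, 1} : Set ℝ))
    (hmax : ∀ p ∈ ({0, 1} : Set ℝ) ×ˢ ({0, 1} : Set ℝ),
      linkPotential R1 R2 Λ p.1 p.2 ≤ linkPotential R1 R2 Λ a1 a2) :
    IsLinkNE R1 R2 Λ a1 a2 := by
  obtain ⟨ha1, ha2⟩ : a1 ∈ ({0, 1} : Set ℝ) ∧ a2 ∈ ({0, 1} : Set ℝ) := hmem
  refine ⟨ha1, ha2, fun a ha => ?_, fun a ha => ?_⟩
  · rw [linkUtil_eq_linkPotential_sub ha ha2 R1 R2, linkUtil_eq_linkPotential_sub ha1 ha2 R1 R2]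
    linarith [hmax (a, a2) ⟨ha, ha2⟩]
  · rw [linkUtil_eq_linkPotential_sub ha ha1 R2 R1, linkUtil_eq_linkPotential_sub ha2 ha1 R2 R1,
      linkPotential_comm R2 R1 Λ a, linkPotential_comm R2 R1 Λ a2]
    linarith [hmax (a1, a) ⟨ha1, ha⟩]

theorem link_formation_game_has_pure_NE_general (R1 R2 Λ : ℝ) :
    ∃ a1 a2 : ℝ, IsLinkNE R1 R2 Λ a1 a2 := by
  obtain ⟨⟨a1, a2⟩, hmem, hmax⟩ :=
    (({0, 1} : Set ℝ) ×ˢ ({0, 1} : Set ℝ)).exists_max_image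
      (fun p => linkPotential R1 R2 Λ p.1 p.2) (Set.toFinite _)
      ((Set.insert_nonempty _ _).prod (Set.insert_nonempty _ _))
  exact ⟨a1, a2, isLinkNE_of_forall_linkPotential_le hmem hmax⟩

/-- Paper's Theorem 3. For every `R1 R2 : ℝ` and `Λ ≥ 0`,
the link formation game has at least one pure-strategy Nash equilibrium. -/
theorem link_formation_game_has_pure_NE (R1 R2 Λ : ℝ) (hΛ : 0 ≤ Λ) :
    ∃ a1 a2 : ℝ, IsLinkNE R1 R2 Λ a1 a2 :=
  link_formation_game_has_pure_NE_general R1 R2 Λ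
end

section
/- Fix R_1, R_2 ∈ ℝ and Λ ≥ 0. Define the best-response map BR_i(a_j) = 1 if R_i ≥ Λ/(1 + a_j) and BR_i(a_j) = 0 otherwise, for a_j ∈ {0,1}, and let T(a_1, a_2) = (BR_1(a_2), BR_2(a_1)). Then: (i) T is monotone with respect to the componentwise order on {0,1}²; (ii) the iteration starting from (0,0) is componentwise nondecreasing; and (iii) T²(0,0) is a fixed point of T and is a pure-strategy Nash equilibrium of the link formation game. (This establishes that the best-response while-loop in the paper's Algorithm 1 terminates at a stable link configuration.) -/
/-- Best response of a player with reward `R` against opponent action `b`: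
build the link (`1`) iff `R ≥ Λ/(1 + b)`. -/
noncomputable def BR (R Λ b : ℝ) : ℝ := if Λ / (1 + b) ≤ R then 1 else 0

/-- Joint best-response map `T(a1, a2) = (BR₁(a2), BR₂(a1))`. -/
noncomputable def brMap (R1 R2 Λ : ℝ) (p : ℝ × ℝ) : ℝ × ℝ :=
  (BR R1 Λ p.2, BR R2 Λ p.1)

/-! Sharing a link halves its cost, so the threshold `Λ / (1 + b)` falls as the opponent links more:
the best response is monotone and the iteration from `(0, 0)` climbs. It settles after two
steps because a player who links against a non-linking opponent links against every opponent. -/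

theorem MonotoneOn.iterate_le_iterate_succ {α : Type*} [Preorder α] {f : α → α} {s : Set α}
    (hf : MonotoneOn f s) (hs : Set.MapsTo f s s) {x : α} (hx : x ∈ s) (hfx : x ≤ f x) :
    ∀ n : ℕ, f^[n] x ≤ f^[n + 1] x
  | 0 => hfx
  | n + 1 => by
    rw [Function.iterate_succ_apply' f n, Function.iterate_succ_apply' f (n + 1)]
    exact hf (hs.iterate n hx) (hs.iterate (n + 1) hx) (hf.iterate_le_iterate_succ hs hx hfx n)

section BestResponse

variable {R Λ : ℝ}

lemma BR_mem (R Λ b : ℝ) : BR R Λ b ∈ ({0, 1} : Set ℝ) := by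
  unfold BR; split_ifs <;> simp

lemma BR_nonneg (R Λ b : ℝ) : 0 ≤ BR R Λ b := by
  unfold BR; split_ifs <;> norm_num

lemma BR_le_BR (hΛ : 0 ≤ Λ) {b b' : ℝ} (hb : b ∈ ({0, 1} : Set ℝ))
    (hb' : b' ∈ ({0, 1} : Set ℝ)) (h : b ≤ b') : BR R Λ b ≤ BR R Λ b' := by
  rcases hb with rfl | rfl <;> rcases hb' with rfl | rfl
  · exact le_rfl
  · unfold BR
    split_ifs <;> norm_num at *
    linarith
  · norm_num at h
  · exact le_rfl

lemma BR_eq_one_of_BR_zero_eq_one (hΛ : 0 ≤ Λ) (h : BR R Λ 0 = 1) {b : ℝ}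
    (hb : b ∈ ({0, 1} : Set ℝ)) : BR R Λ b = 1 := by
  have hle : BR R Λ 0 ≤ BR R Λ b :=
    BR_le_BR hΛ (by simp) hb (by rcases hb with rfl | rfl <;> norm_num)
  rcases BR_mem R Λ b with h' | h'
  · linarith
  · exact h'

lemma BR_BR_BR_zero (R' : ℝ) (hΛ : 0 ≤ Λ) :
    BR R Λ (BR R' Λ (BR R Λ 0)) = BR R Λ (BR R' Λ 0) := by
  rcases BR_mem R Λ 0 with h | h
  · rw [h]
  · rw [BR_eq_one_of_BR_zero_eq_one hΛ h (BR_mem _ _ _),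
      BR_eq_one_of_BR_zero_eq_one hΛ h (BR_mem _ _ _)]

lemma linkUtil_le_linkUtil_BR {b : ℝ} (hb : b ∈ ({0, 1} : Set ℝ)) {a : ℝ}
    (ha : a ∈ ({0, 1} : Set ℝ)) : linkUtil R Λ a b ≤ linkUtil R Λ (BR R Λ b) b := by
  unfold BR linkUtil
  rcases hb with rfl | rfl <;> rcases ha with rfl | rfl <;> split_ifs <;> norm_num at * <;> linarith

end BestResponse

section BestResponseMap

variable {R1 R2 Λ : ℝ}

lemma brMap_mapsTo (R1 R2 Λ : ℝ) :
    Set.MapsTo (brMap R1 R2 Λ) (({0, 1} : Set ℝ) ×ˢ ({0, 1} : Set ℝ))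
      (({0, 1} : Set ℝ) ×ˢ ({0, 1} : Set ℝ)) :=
  fun _ _ => ⟨BR_mem _ _ _, BR_mem _ _ _⟩

lemma brMap_monotoneOn (hΛ : 0 ≤ Λ) :
    MonotoneOn (brMap R1 R2 Λ) (({0, 1} : Set ℝ) ×ˢ ({0, 1} : Set ℝ)) :=
  fun _ hp _ hq h => ⟨BR_le_BR hΛ hp.2 hq.2 h.2, BR_le_BR hΛ hp.1 hq.1 h.1⟩

lemma isFixedPt_brMap_iterate_two (hΛ : 0 ≤ Λ) :
    Function.IsFixedPt (brMap R1 R2 Λ) ((brMap R1 R2 Λ)^[2] (0, 0)) := by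
  simp only [Function.IsFixedPt, Function.iterate_succ, Function.iterate_zero,
    Function.comp_apply, id_eq, brMap]
  rw [BR_BR_BR_zero R2 hΛ, BR_BR_BR_zero R1 hΛ]

lemma isLinkNE_of_isFixedPt {p : ℝ × ℝ}
    (hp : p ∈ ({0, 1} : Set ℝ) ×ˢ ({0, 1} : Set ℝ)) (hfix : Function.IsFixedPt (brMap R1 R2 Λ) p) :
    IsLinkNE R1 R2 Λ p.1 p.2 := by
  refine ⟨hp.1, hp.2, fun a ha => ?_, fun a ha => ?_⟩
  · rw [← congrArg Prod.fst hfix]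
    exact linkUtil_le_linkUtil_BR hp.2 ha
  · rw [← congrArg Prod.snd hfix]
    exact linkUtil_le_linkUtil_BR hp.1 ha

end BestResponseMap

/-- The best-response map `T` of the link formation game is
(i) monotone on `{0,1}²` w.r.t. the componentwise order, (ii) its iteration from
`(0,0)` is componentwise nondecreasing, and (iii) `T²(0,0)` is a fixed point of `T`
and a pure-strategy Nash equilibrium; hence Algorithm 1's best-response loop
terminates at a stable link configuration. -/
theorem best_response_iteration (R1 R2 Λ : ℝ) (hΛ : 0 ≤ Λ) :
    (∀ p q : ℝ × ℝ, p.1 ∈ ({0, 1} : Set ℝ) → p.2 ∈ ({0, 1} : Set ℝ) →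
      q.1 ∈ ({0, 1} : Set ℝ) → q.2 ∈ ({0, 1} : Set ℝ) →
      p.1 ≤ q.1 → p.2 ≤ q.2 →
      (brMap R1 R2 Λ p).1 ≤ (brMap R1 R2 Λ q).1 ∧
      (brMap R1 R2 Λ p).2 ≤ (brMap R1 R2 Λ q).2) ∧
    (∀ n : ℕ,
      ((brMap R1 R2 Λ)^[n] (0, 0)).1 ≤ ((brMap R1 R2 Λ)^[n + 1] (0, 0)).1 ∧
      ((brMap R1 R2 Λ)^[n] (0, 0)).2 ≤ ((brMap R1 R2 Λ)^[n + 1] (0, 0)).2) ∧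
    (brMap R1 R2 Λ ((brMap R1 R2 Λ)^[2] (0, 0)) = (brMap R1 R2 Λ)^[2] (0, 0) ∧
      IsLinkNE R1 R2 Λ ((brMap R1 R2 Λ)^[2] (0, 0)).1 ((brMap R1 R2 Λ)^[2] (0, 0)).2) := by
  have hzero : ((0, 0) : ℝ × ℝ) ∈ ({0, 1} : Set ℝ) ×ˢ ({0, 1} : Set ℝ) := by simp
  have hfix := isFixedPt_brMap_iterate_two (R1 := R1) (R2 := R2) hΛ
  refine ⟨fun p q hp1 hp2 hq1 hq2 h1 h2 => brMap_monotoneOn hΛ ⟨hp1, hp2⟩ ⟨hq1, hq2⟩ ⟨h1, h2⟩,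
    (brMap_monotoneOn hΛ).iterate_le_iterate_succ (brMap_mapsTo R1 R2 Λ) hzero
      ⟨BR_nonneg _ _ _, BR_nonneg _ _ _⟩, hfix, ?_⟩
  exact isLinkNE_of_isFixedPt ((brMap_mapsTo R1 R2 Λ).iterate 2 hzero) hfix
end
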